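/- Let d ≥ 1, let A ⊆ ℝ^d be an arbitrary set, let r > 0 and c ∈ [0,1]. Then the Lebesgue volume of the r-thickening of the dilated set is at most the Lebesgue volume of the r-thickening of the set itself: |B_r(c·A)| ≤ |B_r(A)|. -/

import Mathlib

/-!
Kneser's argument. We may assume `A` closed and nonempty and `0 < c`. Let `p x` be a nearest
point of `A` to `x` and move `x` towards it: `f x = p x + c • (x - p x)`. Comparing `x` and `y`
with their nearest points gives `0 ≤ ⟪p x - p y, x - y⟫`, whence `c * ‖x - y‖ ≤ ‖f x - f y‖`.
So `f` is `c⁻¹`-antilipschitz, and it maps `B_{r/c}(A)` into `B_r(A)`. For such a map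
`cᵈ μH[d](s) ≤ μH[d](f '' s)`, and Haar measures are multiples of `μH[d]`, so
`|B_r(c • A)| = |c • B_{r/c}(A)| = cᵈ |B_{r/c}(A)| ≤ |B_r(A)|`.
-/

open Pointwise

open MeasureTheory

/-- The open `r`-thickening of a set `A ⊆ ℝ^d`. -/
def thick {d : ℕ} (r : ℝ) (A : Set (EuclideanSpace ℝ (Fin d))) :
    Set (EuclideanSpace ℝ (Fin d)) :=
  {x | ∃ a ∈ A, dist x a < r}

open Metric Module Set
open scoped NNReal ENNReal RealInnerProductSpace

theorem AntilipschitzWith.le_addHaar_image {E : Type*} [NormedAddCommGroup E] [NormedSpace ℝ E]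
    [FiniteDimensional ℝ E] [MeasurableSpace E] [BorelSpace E] (μ : Measure E)
    [μ.IsAddHaarMeasure] {K : ℝ≥0} {f : E → E} (hf : AntilipschitzWith K f) (s : Set E) :
    μ s ≤ (K : ℝ≥0∞) ^ finrank ℝ E * μ (f '' s) := by
  have hH := hf.le_hausdorffMeasure_image (d := finrank ℝ E) (Nat.cast_nonneg _) s
  rw [ENNReal.rpow_natCast] at hH
  rw [Measure.isAddLeftInvariant_eq_smul μ μH[finrank ℝ E]]
  simp only [Measure.smul_apply, ENNReal.smul_def, smul_eq_mul]
  rw [mul_left_comm]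
  gcongr

theorem smul_thickening {𝕜 E : Type*} [NormedField 𝕜] [SeminormedAddCommGroup E]
    [NormedSpace 𝕜 E] {c : 𝕜} (hc : c ≠ 0) (δ : ℝ) (s : Set E) :
    c • thickening δ s = thickening (‖c‖ * δ) (c • s) := by
  ext x
  simp only [mem_smul_set, mem_thickening_iff, exists_exists_and_eq_and]
  constructor
  · rintro ⟨y, ⟨a, ha, hya⟩, rfl⟩
    exact ⟨a, ha, by rw [dist_smul₀]; gcongr⟩
  · rintro ⟨a, ha, hxa⟩
    refine ⟨c⁻¹ • x, ⟨a, ha, ?_⟩, smul_inv_smul₀ hc x⟩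
    rwa [← smul_inv_smul₀ hc x, dist_smul₀, mul_lt_mul_iff_right₀ (norm_pos_iff.2 hc)]
      at hxa

section InnerProductSpace

variable {F : Type*} [NormedAddCommGroup F] [InnerProductSpace ℝ F]

theorem real_inner_sub_sub_nonneg_of_norm_sub_le {x y a b : F} (hx : ‖x - a‖ ≤ ‖x - b‖)
    (hy : ‖y - b‖ ≤ ‖y - a‖) : 0 ≤ ⟪a - b, x - y⟫ := by
  have hx2 := pow_le_pow_left₀ (norm_nonneg _) hx 2
  have hy2 := pow_le_pow_left₀ (norm_nonneg _) hy 2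
  simp only [norm_sub_sq_real, inner_sub_right, real_inner_comm x, real_inner_comm y]
    at hx2 hy2 ⊢
  linarith

theorem norm_le_norm_add_of_real_inner_nonneg {v w : F} (h : 0 ≤ ⟪v, w⟫) :
    ‖w‖ ≤ ‖v + w‖ := by
  rw [← pow_le_pow_iff_left₀ (norm_nonneg _) (norm_nonneg _) two_ne_zero, norm_add_sq_real]
  nlinarith [sq_nonneg ‖v‖]

theorem mul_norm_sub_le_norm_sub_of_norm_sub_le {x y a b : F} (hx : ‖x - a‖ ≤ ‖x - b‖)
    (hy : ‖y - b‖ ≤ ‖y - a‖) {t : ℝ} (ht₀ : 0 ≤ t) (ht₁ : t ≤ 1) :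
    t * ‖x - y‖ ≤ ‖(a + t • (x - a)) - (b + t • (y - b))‖ := by
  have hdecomp :
      (a + t • (x - a)) - (b + t • (y - b)) = (1 - t) • (a - b) + t • (x - y) := by
    module
  have hinner : 0 ≤ ⟪(1 - t) • (a - b), t • (x - y)⟫ := by
    rw [real_inner_smul_left, real_inner_smul_right]
    have := real_inner_sub_sub_nonneg_of_norm_sub_le hx hy
    have : 0 ≤ 1 - t := by linarith
    positivity
  calc t * ‖x - y‖ = ‖t • (x - y)‖ := by rw [norm_smul, Real.norm_of_nonneg ht₀]
    _ ≤ _ := hdecomp ▸ norm_le_norm_add_of_real_inner_nonneg hinner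

theorem exists_antilipschitzWith_mapsTo_thickening [ProperSpace F] {S : Set F}
    (hS : IsClosed S) (hne : S.Nonempty) {c : ℝ} (hc₀ : 0 < c) (hc₁ : c ≤ 1) :
    ∃ f : F → F, AntilipschitzWith (Real.toNNReal c⁻¹) f ∧
      ∀ r, MapsTo f (thickening r S) (thickening (c * r) S) := by
  choose p hpS hp using hS.exists_infDist_eq_dist hne
  have hnearest : ∀ x y, ‖x - p x‖ ≤ ‖x - p y‖ := fun x y => by
    simpa only [← dist_eq_norm, ← hp x] using infDist_le_dist_of_mem (hpS y)
  refine ⟨fun x => p x + c • (x - p x), AntilipschitzWith.of_le_mul_dist fun x y => ?_, ?_⟩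
  · rw [Real.coe_toNNReal _ (inv_nonneg.2 hc₀.le), le_inv_mul_iff₀ hc₀, dist_eq_norm,
      dist_eq_norm]
    exact mul_norm_sub_le_norm_sub_of_norm_sub_le (hnearest x y) (hnearest y x) hc₀.le hc₁
  · intro r x hx
    rw [mem_thickening_iff_infDist_lt hne, hp] at hx
    refine mem_thickening_iff.2 ⟨p x, hpS x, ?_⟩
    rw [dist_eq_norm, add_sub_cancel_left, norm_smul, Real.norm_of_nonneg hc₀.le,
      ← dist_eq_norm]
    gcongr

end InnerProductSpace

section AddHaar

variable {E : Type*} [NormedAddCommGroup E] [InnerProductSpace ℝ E] [FiniteDimensional ℝ E]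
  [MeasurableSpace E] [BorelSpace E] (μ : Measure E) [μ.IsAddHaarMeasure]

theorem ofReal_pow_finrank_mul_addHaar_thickening_le (S : Set E) (r : ℝ) {c : ℝ}
    (hc₀ : 0 < c) (hc₁ : c ≤ 1) :
    ENNReal.ofReal (c ^ finrank ℝ E) * μ (thickening r S) ≤ μ (thickening (c * r) S) := by
  rw [← thickening_closure, ← thickening_closure (s := S)]
  rcases (closure S).eq_empty_or_nonempty with hS | hS
  · simp [hS]
  obtain ⟨f, hf, hmaps⟩ :=
    exists_antilipschitzWith_mapsTo_thickening isClosed_closure hS hc₀ hc₁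
  have hcancel :
      ENNReal.ofReal (c ^ finrank ℝ E) * (Real.toNNReal c⁻¹ : ℝ≥0∞) ^ finrank ℝ E = 1 := by
    rw [← ENNReal.ofReal, ← ENNReal.ofReal_pow (inv_nonneg.2 hc₀.le),
      ← ENNReal.ofReal_mul (by positivity), ← mul_pow, mul_inv_cancel₀ hc₀.ne', one_pow,
      ENNReal.ofReal_one]
  calc ENNReal.ofReal (c ^ finrank ℝ E) * μ (thickening r (closure S))
      ≤ ENNReal.ofReal (c ^ finrank ℝ E) *
          ((Real.toNNReal c⁻¹ : ℝ≥0∞) ^ finrank ℝ E * μ (f '' thickening r (closure S))) := by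
        gcongr
        exact hf.le_addHaar_image μ _
    _ = μ (f '' thickening r (closure S)) := by rw [← mul_assoc, hcancel, one_mul]
    _ ≤ μ (thickening (c * r) (closure S)) := measure_mono (hmaps r).image_subset

theorem addHaar_thickening_smul_le (S : Set E) (r : ℝ) {c : ℝ} (hc₀ : 0 ≤ c) (hc₁ : c ≤ 1) :
    μ (thickening r (c • S)) ≤ μ (thickening r S) := by
  rcases S.eq_empty_or_nonempty with rfl | ⟨a, ha⟩
  · simp
  rcases hc₀.eq_or_lt with rfl | hc₀
  · rw [zero_smul_set ⟨a, ha⟩, ← singleton_zero, thickening_singleton,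
      ← Measure.addHaar_ball_center μ a]
    exact measure_mono (ball_subset_thickening ha r)
  have hscale : thickening r (c • S) = c • thickening (r / c) S := by
    rw [smul_thickening hc₀.ne', Real.norm_of_nonneg hc₀.le, mul_div_cancel₀ r hc₀.ne']
  calc μ (thickening r (c • S))
      = ENNReal.ofReal (c ^ finrank ℝ E) * μ (thickening (r / c) S) := by
        rw [hscale, Measure.addHaar_smul, abs_of_nonneg (by positivity)]
    _ ≤ μ (thickening (c * (r / c)) S) :=
        ofReal_pow_finrank_mul_addHaar_thickening_le μ S _ hc₀ hc₁
    _ = μ (thickening r S) := by rw [mul_div_cancel₀ r hc₀.ne']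

end AddHaar

theorem thick_eq_thickening {d : ℕ} (r : ℝ) (A : Set (EuclideanSpace ℝ (Fin d))) :
    thick r A = thickening r A :=
  Set.ext fun _ => mem_thickening_iff.symm

theorem volume_thickening_dilation_le_general (d : ℕ)
    (A : Set (EuclideanSpace ℝ (Fin d))) (r : ℝ)
    (c : ℝ) (hc₀ : 0 ≤ c) (hc₁ : c ≤ 1) :
    volume (thick r (c • A)) ≤ volume (thick r A) := by
  simpa only [thick_eq_thickening] using addHaar_thickening_smul_le volume A r hc₀ hc₁

/-- For an arbitrary set `A ⊆ ℝ^d`, `r > 0` and `c ∈ [0,1]`,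
`|B_r(c·A)| ≤ |B_r(A)|`. -/
theorem volume_thickening_dilation_le (d : ℕ) (hd : 1 ≤ d)
    (A : Set (EuclideanSpace ℝ (Fin d))) (r : ℝ) (hr : 0 < r)
    (c : ℝ) (hc₀ : 0 ≤ c) (hc₁ : c ≤ 1) :
    volume (thick r (c • A)) ≤ volume (thick r A) :=
  volume_thickening_dilation_le_general d A r c hc₀ hc₁
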